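/- Let γ > 0, a ∈ ℝ, and ψ ∈ L²(ℝ, ℂ). Then for every z ∈ ℂ, 𝔅_γ[x ↦ ψ(x − a)](z) = 𝔅_γψ(z − a/√2); that is, the RBF Segal–Bargmann transform intertwines translation by a on L²(ℝ) with translation by a/√2 on the RBF space. -/

import Mathlib

open MeasureTheory Complex

/-- The RBF Segal–Bargmann transform
`𝔅_γψ(z) = (2/(πγ²))^{1/4} ∫_ℝ exp(−(x − √2 z)²/γ²) ψ(x) dx`. -/
noncomputable def rbfSB (γ : ℝ) (ψ : ℝ → ℂ) (z : ℂ) : ℂ :=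
  (((2 / (Real.pi * γ ^ 2)) ^ ((1 : ℝ) / 4) : ℝ) : ℂ) *
    ∫ x : ℝ, Complex.exp (-((x : ℂ) - (Real.sqrt 2 : ℂ) * z) ^ 2 / (γ : ℂ) ^ 2) * ψ x

/- The whole argument is the translation invariance of Lebesgue measure: substituting `x ↦ x + a`
moves the shift from `ψ` onto the kernel, where `x + a - √2 z = x - √2 (z - a/√2)`. -/

theorem integral_mul_comp_sub_right {G E : Type*} [MeasurableSpace G] [AddGroup G]
    [MeasurableAdd G] [NormedRing E] [NormedSpace ℝ E] (μ : Measure G) [μ.IsAddRightInvariant]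
    (k f : G → E) (a : G) :
    ∫ x, k x * f (x - a) ∂μ = ∫ x, k (x + a) * f x ∂μ := by
  simpa only [sub_add_cancel] using integral_sub_right_eq_self (fun x => k (x + a) * f x) a

theorem sqrt_two_mul_sub_div_sqrt_two (z a : ℂ) :
    (Real.sqrt 2 : ℂ) * (z - a / (Real.sqrt 2 : ℂ)) = (Real.sqrt 2 : ℂ) * z - a := by
  have hsqrt2 : (Real.sqrt 2 : ℂ) ≠ 0 := by exact_mod_cast (by positivity : Real.sqrt 2 ≠ 0)
  rw [mul_sub, mul_div_cancel₀ a hsqrt2]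

theorem rbfSB_translation_general (γ : ℝ) (a : ℝ) (ψ : ℝ → ℂ) :
    ∀ z : ℂ,
      rbfSB γ (fun x => ψ (x - a)) z = rbfSB γ ψ (z - (a : ℂ) / (Real.sqrt 2 : ℂ)) := by
  intro z
  unfold rbfSB
  rw [integral_mul_comp_sub_right, sqrt_two_mul_sub_div_sqrt_two]
  congr 2 with x
  push_cast
  ring_nf

theorem rbfSB_translation (γ : ℝ) (hγ : 0 < γ) (a : ℝ) (ψ : ℝ → ℂ)
    (hψ : MemLp ψ 2 volume) :
    ∀ z : ℂ,
      rbfSB γ (fun x => ψ (x - a)) z = rbfSB γ ψ (z - (a : ℂ) / (Real.sqrt 2 : ℂ)) :=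
  rbfSB_translation_general γ a ψ
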